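/- arXiv:2511.19043 — 2 statements merged into one kernel-verified Lean document; each statement's English description precedes it below -/
import Mathlib

section
/- Let I be a nonzero polarized neural ideal on n neurons. Then reg(I) ≤ 2n − 1. In particular, the regularity bound reg(I) ≤ max over nonempty subsets A of mingens(I) of (deg(lcm(A)) − |A|) + 1 cannot attain the value 2n, because the only squarefree monomial ideal in 2n variables having the full product ∏ x_i y_i as a minimal generator is the principal ideal generated by it, which is excluded by the polarized neural condition. -/
set_option linter.unusedSectionVars false
set_option maxHeartbeats 1000000


open MvPolynomial

namespace Neural

/-- The degree of a monomial given by its exponent vector. -/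
def degE {σ : Type} (s : σ →₀ ℕ) : ℕ := s.sum fun _ e => e

/-- Exponent vector of the lcm of two monomials. -/
noncomputable def lcmE {σ : Type} (s t : σ →₀ ℕ) : σ →₀ ℕ :=
  Finsupp.zipWith max (max_self 0) s t

/-- Exponent vector of the gcd of two monomials. -/
noncomputable def gcdE {σ : Type} (s t : σ →₀ ℕ) : σ →₀ ℕ :=
  Finsupp.zipWith min (min_self 0) s t

/-- `G` is the minimal monomial generating set (given by exponent vectors) of `I`. -/
def IsMingens (k σ : Type) [Field k] (I : Ideal (MvPolynomial σ k)) (G : Set (σ →₀ ℕ)) : Prop :=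
  I = Ideal.span ((fun s => (monomial s 1 : MvPolynomial σ k)) '' G) ∧
    ∀ s ∈ G, (monomial s 1 : MvPolynomial σ k) ∉
      Ideal.span ((fun t => (monomial t 1 : MvPolynomial σ k)) '' (G \ {s}))

/-- `I` is a monomial ideal. -/
def IsMonomialIdeal (k σ : Type) [Field k] (I : Ideal (MvPolynomial σ k)) : Prop :=
  ∃ G : Set (σ →₀ ℕ), I = Ideal.span ((fun s => (monomial s 1 : MvPolynomial σ k)) '' G)

/-- The graded free module with `B j` copies of `S(-j)`. -/
noncomputable abbrev FreeMod (k σ : Type) [Field k] (B : ℕ → ℕ) : Type :=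
  ((j : ℕ) × Fin (B j)) →₀ MvPolynomial σ k

/-- A minimal graded free resolution of the ideal `I`, with graded Betti numbers
`B i j` (the number of copies of `S(-j)` in homological degree `i`). -/
structure MinFreeRes (k σ : Type) [Field k] (I : Ideal (MvPolynomial σ k))
    (B : ℕ → ℕ → ℕ) where
  finB : ∀ i, {j | B i j ≠ 0}.Finite
  d : (i : ℕ) → FreeMod k σ (B (i+1)) →ₗ[MvPolynomial σ k] FreeMod k σ (B i)
  ε : FreeMod k σ (B 0) →ₗ[MvPolynomial σ k] MvPolynomial σ k
  range_ε : LinearMap.range ε = I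
  graded_ε : ∀ p : (j : ℕ) × Fin (B 0 j),
    (ε (Finsupp.single p 1)).IsHomogeneous p.1
  exact₀ : LinearMap.ker ε = LinearMap.range (d 0)
  exact : ∀ i, LinearMap.ker (d i) = LinearMap.range (d (i+1))
  graded_d : ∀ (i : ℕ) (p : (j : ℕ) × Fin (B (i+1) j)) (q : (j : ℕ) × Fin (B i j)),
    ((d i (Finsupp.single p 1)) q).IsHomogeneous (p.1 - q.1)
  minimal : ∀ (i : ℕ) (p : (j : ℕ) × Fin (B (i+1) j)) (q : (j : ℕ) × Fin (B i j)),
    p.1 ≤ q.1 → (d i (Finsupp.single p 1)) q = 0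

/-- The graded Betti number `β_{i,j}(I)` is nonzero. -/
def BettiNonzero (k σ : Type) [Field k] (I : Ideal (MvPolynomial σ k)) (i j : ℕ) : Prop :=
  ∃ B : ℕ → ℕ → ℕ, Nonempty (MinFreeRes k σ I B) ∧ B i j ≠ 0

/-- The projective dimension of an ideal `I`. -/
noncomputable def pd (k σ : Type) [Field k] (I : Ideal (MvPolynomial σ k)) : ℕ :=
  sSup {i | ∃ j, BettiNonzero k σ I i j}

/-- The Castelnuovo–Mumford regularity of an ideal `I`:
`reg I = max { j - i | β_{i,j}(I) ≠ 0 }`. -/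
noncomputable def reg (k σ : Type) [Field k] (I : Ideal (MvPolynomial σ k)) : ℕ :=
  sSup {r | ∃ i j, BettiNonzero k σ I i j ∧ r = j - i}

/-- `I` is generated in (the fixed) degree `d`. -/
def GeneratedInDegree (k σ : Type) [Field k] (I : Ideal (MvPolynomial σ k)) (d : ℕ) : Prop :=
  ∃ G, IsMingens k σ I G ∧ ∀ s ∈ G, degE s = d

/-- `I` has linear resolution. -/
def HasLinearResolution (k σ : Type) [Field k] (I : Ideal (MvPolynomial σ k)) : Prop :=
  ∃ d, GeneratedInDegree k σ I d ∧ reg k σ I = d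

/-- `I` has linear quotients: the minimal monomial generators can be ordered so that each
successive colon ideal is generated by a set of variables. -/
def HasLinearQuotients (k σ : Type) [Field k] (I : Ideal (MvPolynomial σ k)) : Prop :=
  ∃ L : List (σ →₀ ℕ), L.Nodup ∧ IsMingens k σ I {s | s ∈ L} ∧
    ∀ (i : ℕ) (h : i + 1 < L.length), ∃ V : Set σ,
      Submodule.colon
          (Ideal.span ((fun s => (monomial s 1 : MvPolynomial σ k)) '' {s | s ∈ L.take (i+1)}))
          (Ideal.span {(monomial (L.get ⟨i+1, h⟩) 1 : MvPolynomial σ k)}) =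
        Ideal.span ((fun v => (X v : MvPolynomial σ k)) '' V)

/-- A polarized neural ideal on `n` neurons: a squarefree monomial ideal in
`k[x_1,…,x_n,y_1,…,y_n]` (with `x_i = X (Sum.inl i)`, `y_i = X (Sum.inr i)`) such that
no minimal monomial generator is divisible by `x_i * y_i` for any `i`. -/
def IsPolarizedNeural (k : Type) [Field k] (n : ℕ)
    (I : Ideal (MvPolynomial (Fin n ⊕ Fin n) k)) : Prop :=
  ∃ G, IsMingens k (Fin n ⊕ Fin n) I G ∧
    ∀ s ∈ G, (∀ v, s v ≤ 1) ∧ ∀ i : Fin n, s (Sum.inl i) = 0 ∨ s (Sum.inr i) = 0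

/-- A dominant set of squarefree monomials: each member has a variable dividing it
and no other member of the set. -/
def IsDominant {σ : Type} (G : Set (σ →₀ ℕ)) : Prop :=
  (∀ s ∈ G, ∀ v, s v ≤ 1) ∧ ∀ s ∈ G, ∃ v, s v ≠ 0 ∧ ∀ t ∈ G, t v ≠ 0 → t = s



namespace TaylorAux

open Finsupp

variable {k : Type} [Field k] {σ : Type} [Fintype σ] [DecidableEq σ]

lemma degE_eq_degree {σ : Type} (s : σ →₀ ℕ) : degE s = Finsupp.degree s := rfl

lemma degE_eq_sum (s : σ →₀ ℕ) : degE s = ∑ v : σ, s v := by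
  rw [degE]
  exact Finsupp.sum_fintype _ _ (fun _ => rfl)

lemma degE_add (s t : σ →₀ ℕ) : degE (s + t) = degE s + degE t := by
  simp [degE_eq_sum, Finsupp.add_apply, Finset.sum_add_distrib]

lemma degE_mono {s t : σ →₀ ℕ} (h : s ≤ t) : degE s ≤ degE t := by
  simp only [degE_eq_sum]
  exact Finset.sum_le_sum fun v _ => (Finsupp.le_def.mp h) v

lemma degE_tsub {s t : σ →₀ ℕ} (h : t ≤ s) : degE (s - t) = degE s - degE t := by
  have : degE (s - t) + degE t = degE s := by
    rw [← degE_add, tsub_add_cancel_of_le h]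
  omega

lemma cc_of_homog {f : MvPolynomial σ k} {m : ℕ} (h : f.IsHomogeneous m) (hm : m ≠ 0) :
    constantCoeff f = 0 := by
  rw [constantCoeff_eq]
  by_contra hc
  exact hm (by simpa using (h hc).symm)

lemma homog_support_degE {f : MvPolynomial σ k} {m : ℕ} (h : f.IsHomogeneous m)
    {c : σ →₀ ℕ} (hc : c ∈ f.support) : degE c = m := by
  have := h (MvPolynomial.mem_support_iff.mp hc)
  rw [degE_eq_degree, Finsupp.degree_eq_weight_one]; exact this

/-- Extend values on basis elements to an `S`-linear map from a `Finsupp`. -/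
noncomputable def mkLin {β M : Type} [AddCommMonoid M] [Module (MvPolynomial σ k) M]
    (v : β → M) : (β →₀ MvPolynomial σ k) →ₗ[MvPolynomial σ k] M :=
  Finsupp.lsum (MvPolynomial σ k) fun b => LinearMap.toSpanSingleton _ _ (v b)

@[simp] lemma mkLin_single {β M : Type} [AddCommMonoid M] [Module (MvPolynomial σ k) M]
    (v : β → M) (b : β) (s : MvPolynomial σ k) : mkLin v (single b s) = s • v b := by
  simp [mkLin]

/-- Extend values on monomials to a `k`-linear map from the polynomial ring. -/
noncomputable def klinS {M : Type} [AddCommMonoid M] [Module k M]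
    (v : (σ →₀ ℕ) → M) : MvPolynomial σ k →ₗ[k] M :=
  (MvPolynomial.basisMonomials σ k).constr k v

lemma klinS_monomial {M : Type} [AddCommMonoid M] [Module k M]
    (v : (σ →₀ ℕ) → M) (c : σ →₀ ℕ) (a : k) : klinS v (monomial c a) = a • v c := by
  have h1 : (monomial c a : MvPolynomial σ k) = a • monomial c 1 := by
    rw [MvPolynomial.smul_monomial, smul_eq_mul, mul_one]
  rw [h1, map_smul]
  congr 1
  have := Module.Basis.constr_basis (MvPolynomial.basisMonomials σ k) k v c
  rwa [MvPolynomial.coe_basisMonomials] at this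


section Taylor

variable (k σ) {r : ℕ} (g : Fin r → (σ →₀ ℕ))

/-- Free module of the Taylor complex in homological degree `i`:
basis indexed by `(i+1)`-tuples of generators. -/
abbrev TT (r i : ℕ) : Type := (Fin (i+1) → Fin r) →₀ MvPolynomial σ k

variable {k σ}

/-- lcm of the generators in a tuple. -/
noncomputable def lcmT {m : ℕ} (w : Fin m → Fin r) : σ →₀ ℕ :=
  Finset.univ.sup (fun x => g (w x))

lemma g_le_lcmT {m : ℕ} (w : Fin m → Fin r) (x : Fin m) : g (w x) ≤ lcmT g w := by
  rw [lcmT]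
  exact Finset.le_sup (f := fun x => g (w x)) (Finset.mem_univ x)

lemma lcmT_comp_le {m m' : ℕ} (w : Fin m → Fin r) (u : Fin m' → Fin m) :
    lcmT g (w ∘ u) ≤ lcmT g w :=
  Finset.sup_le fun x _ => g_le_lcmT g w (u x)

lemma lcmT_le {m : ℕ} (w : Fin m → Fin r) {b : σ →₀ ℕ} (h : ∀ x, g (w x) ≤ b) :
    lcmT g w ≤ b := Finset.sup_le fun x _ => h x

/-- Value of the Taylor differential on a basis tuple. -/
noncomputable def dval {i : ℕ} (w : Fin (i+2) → Fin r) : TT k σ r i :=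
  ∑ j : Fin (i+2), Finsupp.single (w ∘ j.succAbove)
    (monomial (lcmT g w - lcmT g (w ∘ j.succAbove)) ((-1:k)^(j:ℕ)))

/-- The Taylor differential. -/
noncomputable def dT (i : ℕ) : TT k σ r (i+1) →ₗ[MvPolynomial σ k] TT k σ r i :=
  mkLin (fun w => dval g w)

/-- The Taylor augmentation. -/
noncomputable def epsT : TT k σ r 0 →ₗ[MvPolynomial σ k] MvPolynomial σ k :=
  mkLin (fun w => monomial (lcmT g w) 1)

open Classical in
/-- Least generator index dividing `b`, if any. -/
noncomputable def apex (b : σ →₀ ℕ) : Option (Fin r) :=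
  if h : (Finset.univ.filter (fun a => g a ≤ b)).Nonempty
  then some ((Finset.univ.filter (fun a => g a ≤ b)).min' h) else none

lemma apex_isSome {b : σ →₀ ℕ} {a₀ : Fin r} (h : g a₀ ≤ b) :
    ∃ v, apex g b = some v := by
  classical
  have hne : (Finset.univ.filter (fun a => g a ≤ b)).Nonempty :=
    ⟨a₀, by simp [h]⟩
  exact ⟨_, by rw [apex, dif_pos hne]⟩

lemma apex_le {b : σ →₀ ℕ} {v : Fin r} (h : apex g b = some v) : g v ≤ b := by
  classical
  rw [apex] at h
  split_ifs at h with hne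
  · have hv := Option.some_inj.mp h
    rw [← hv]
    have := Finset.min'_mem _ hne
    simpa using this

/-- Value of the contracting homotopy on a basis monomial. -/
noncomputable def Hval {i : ℕ} (w : Fin (i+1) → Fin r) (c : σ →₀ ℕ) : TT k σ r (i+1) :=
  match apex g (c + lcmT g w) with
  | Option.some v => Finsupp.single (Fin.cons v w)
      (monomial ((c + lcmT g w) - lcmT g (Fin.cons v w)) (1:k))
  | Option.none => 0

/-- The contracting homotopy (k-linear). -/
noncomputable def HT (i : ℕ) : TT k σ r i →ₗ[k] TT k σ r (i+1) :=
  Finsupp.lsum k fun w => klinS (Hval g w)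

/-- The bottom contracting homotopy (k-linear). -/
noncomputable def Hm1 : MvPolynomial σ k →ₗ[k] TT k σ r 0 :=
  klinS (fun b => match apex g b with
    | Option.some v => Finsupp.single (fun _ => v) (monomial (b - lcmT g (fun _ : Fin 1 => v)) (1:k))
    | Option.none => 0)

lemma dT_single {i : ℕ} (w : Fin (i+2) → Fin r) (s : MvPolynomial σ k) :
    dT g i (Finsupp.single w s) = s • dval g w := by
  simp [dT]

lemma epsT_single (w : Fin 1 → Fin r) (s : MvPolynomial σ k) :
    epsT g (Finsupp.single w s) = s * monomial (lcmT g w) 1 := by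
  simp [epsT]

lemma HT_single {i : ℕ} (w : Fin (i+1) → Fin r) (c : σ →₀ ℕ) (a : k) :
    HT g i (Finsupp.single w (monomial c a)) = a • Hval g w c := by
  rw [HT, Finsupp.lsum_single, klinS_monomial]

lemma Hm1_monomial (c : σ →₀ ℕ) (a : k) :
    Hm1 g (monomial c a) = a • (match apex g c with
      | Option.some v => Finsupp.single (fun _ => v)
          (monomial (c - lcmT g (fun _ : Fin 1 => v)) (1:k))
      | Option.none => 0) := by
  rw [Hm1, klinS_monomial]

end Taylor


section Identities

variable {r : ℕ} (g : Fin r → (σ →₀ ℕ))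

lemma cons_comp_zero {m : ℕ} (v : Fin r) (w : Fin (m+1) → Fin r) :
    (Fin.cons v w : Fin (m+2) → Fin r) ∘ (Fin.succAbove 0) = w := by
  funext x
  simp [Fin.zero_succAbove]

lemma cons_comp_succ {m : ℕ} (v : Fin r) (w : Fin (m+1) → Fin r) (j : Fin (m+1)) :
    (Fin.cons v w : Fin (m+2) → Fin r) ∘ (Fin.succAbove j.succ)
      = Fin.cons v (w ∘ Fin.succAbove j) := by
  funext x
  induction x using Fin.cases with
  | zero => simp
  | succ y => simp [Fin.succ_succAbove_succ]

lemma dT_single_monomial {i : ℕ} (u : Fin (i+2) → Fin r) (e : σ →₀ ℕ) (a : k) :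
    dT g i (Finsupp.single u (monomial e a)) =
      ∑ j : Fin (i+2), Finsupp.single (u ∘ Fin.succAbove j)
        (monomial (e + (lcmT g u - lcmT g (u ∘ Fin.succAbove j))) (a * (-1)^(j:ℕ))) := by
  rw [dT_single, dval, Finset.smul_sum]
  refine Finset.sum_congr rfl fun j _ => ?_
  rw [Finsupp.smul_single', MvPolynomial.monomial_mul]

lemma key_single {i : ℕ} (w : Fin (i+2) → Fin r) (c : σ →₀ ℕ) (a : k) :
    dT g (i+1) (HT g (i+1) (Finsupp.single w (monomial c a)))
      + HT g i (dT g i (Finsupp.single w (monomial c a)))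
      = Finsupp.single w (monomial c a) := by
  obtain ⟨v, hv⟩ := apex_isSome g
    (le_trans (g_le_lcmT g w 0) (le_add_self : lcmT g w ≤ c + lcmT g w))
  have hgv : g v ≤ c + lcmT g w := apex_le g hv
  have hlw : lcmT g w ≤ c + lcmT g w := le_add_self
  have hlc : lcmT g (Fin.cons v w) ≤ c + lcmT g w := by
    apply lcmT_le
    intro x
    induction x using Fin.cases with
    | zero => simpa using hgv
    | succ y => simpa using le_trans (g_le_lcmT g w y) hlw
  -- first summand
  have E1 : HT g (i+1) (Finsupp.single w (monomial c a))
      = Finsupp.single (Fin.cons v w)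
          (monomial ((c + lcmT g w) - lcmT g (Fin.cons v w)) a) := by
    rw [HT_single]
    simp only [Hval, hv]
    rw [Finsupp.smul_single, MvPolynomial.smul_monomial, smul_eq_mul, mul_one]
  have hdH : dT g (i+1) (HT g (i+1) (Finsupp.single w (monomial c a)))
      = Finsupp.single w (monomial c a)
        + ∑ j : Fin (i+2), Finsupp.single (Fin.cons v (w ∘ Fin.succAbove j))
            (monomial ((c + lcmT g w) - lcmT g (Fin.cons v (w ∘ Fin.succAbove j)))
              (a * (-1)^((j:ℕ)+1))) := by
    rw [E1, dT_single_monomial]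
    have hstep : ∀ j : Fin (i+3),
        ((c + lcmT g w) - lcmT g (Fin.cons v w))
          + (lcmT g (Fin.cons v w) - lcmT g ((Fin.cons v w) ∘ Fin.succAbove j))
        = (c + lcmT g w) - lcmT g ((Fin.cons v w) ∘ Fin.succAbove j) :=
      fun j => tsub_add_tsub_cancel hlc (lcmT_comp_le g _ _)
    simp only [hstep]
    rw [Fin.sum_univ_succ]
    congr 1
    · rw [cons_comp_zero, add_tsub_cancel_right, Fin.val_zero, pow_zero, mul_one]
    · refine Finset.sum_congr rfl fun j _ => ?_
      rw [cons_comp_succ, Fin.val_succ]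
  have hHd : HT g i (dT g i (Finsupp.single w (monomial c a)))
      = ∑ j : Fin (i+2), Finsupp.single (Fin.cons v (w ∘ Fin.succAbove j))
          (monomial ((c + lcmT g w) - lcmT g (Fin.cons v (w ∘ Fin.succAbove j)))
            (a * (-1)^(j:ℕ))) := by
    rw [dT_single_monomial, map_sum]
    refine Finset.sum_congr rfl fun j _ => ?_
    rw [HT_single]
    have harg : (c + (lcmT g w - lcmT g (w ∘ Fin.succAbove j))) + lcmT g (w ∘ Fin.succAbove j)
        = c + lcmT g w := by
      rw [add_assoc, tsub_add_cancel_of_le (lcmT_comp_le g w _)]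
    simp only [Hval, harg, hv]
    rw [Finsupp.smul_single, MvPolynomial.smul_monomial, smul_eq_mul, mul_one]
  rw [hdH, hHd, add_assoc, ← Finset.sum_add_distrib]
  have hz : (∑ j : Fin (i+2),
      (Finsupp.single (Fin.cons v (w ∘ Fin.succAbove j))
          (monomial ((c + lcmT g w) - lcmT g (Fin.cons v (w ∘ Fin.succAbove j)))
            (a * (-1)^((j:ℕ)+1)))
        + Finsupp.single (Fin.cons v (w ∘ Fin.succAbove j))
          (monomial ((c + lcmT g w) - lcmT g (Fin.cons v (w ∘ Fin.succAbove j)))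
            (a * (-1)^(j:ℕ))))) = (0 : TT k σ r (i+1)) := by
    refine Finset.sum_eq_zero fun j _ => ?_
    rw [← Finsupp.single_add, ← map_add]
    have hco : a * (-1:k)^((j:ℕ)+1) + a * (-1)^(j:ℕ) = 0 := by ring
    rw [hco, map_zero, Finsupp.single_zero]
  rw [hz, add_zero]

lemma cons_fin1 (v : Fin r) (u : Fin 0 → Fin r) :
    (Fin.cons v u : Fin 1 → Fin r) = (fun _ => v) := by
  funext x
  rw [Fin.fin_one_eq_zero x, Fin.cons_zero]

lemma key_single0 (w : Fin 1 → Fin r) (c : σ →₀ ℕ) (a : k) :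
    dT g 0 (HT g 0 (Finsupp.single w (monomial c a)))
      + Hm1 g (epsT g (Finsupp.single w (monomial c a)))
      = Finsupp.single w (monomial c a) := by
  obtain ⟨v, hv⟩ := apex_isSome g
    (le_trans (g_le_lcmT g w 0) (le_add_self : lcmT g w ≤ c + lcmT g w))
  have hgv : g v ≤ c + lcmT g w := apex_le g hv
  have hlw : lcmT g w ≤ c + lcmT g w := le_add_self
  have hlc : lcmT g (Fin.cons v w) ≤ c + lcmT g w := by
    apply lcmT_le
    intro x
    induction x using Fin.cases with
    | zero => simpa using hgv
    | succ y => simpa using le_trans (g_le_lcmT g w y) hlw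
  have E1 : HT g 0 (Finsupp.single w (monomial c a))
      = Finsupp.single (Fin.cons v w)
          (monomial ((c + lcmT g w) - lcmT g (Fin.cons v w)) a) := by
    rw [HT_single]
    simp only [Hval, hv]
    rw [Finsupp.smul_single, MvPolynomial.smul_monomial, smul_eq_mul, mul_one]
  have hcomp1 : (Fin.cons v w : Fin 2 → Fin r) ∘ (Fin.succAbove 1) = (fun _ : Fin 1 => v) := by
    have h1 : (1 : Fin 2) = (0 : Fin 1).succ := rfl
    rw [h1, cons_comp_succ, cons_fin1]
  have hdH : dT g 0 (HT g 0 (Finsupp.single w (monomial c a)))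
      = Finsupp.single w (monomial c a)
        + Finsupp.single (fun _ : Fin 1 => v)
            (monomial ((c + lcmT g w) - lcmT g (fun _ : Fin 1 => v)) (a * (-1)^(1:ℕ))) := by
    rw [E1, dT_single_monomial]
    have hstep : ∀ j : Fin 2,
        ((c + lcmT g w) - lcmT g (Fin.cons v w))
          + (lcmT g (Fin.cons v w) - lcmT g ((Fin.cons v w) ∘ Fin.succAbove j))
        = (c + lcmT g w) - lcmT g ((Fin.cons v w) ∘ Fin.succAbove j) :=
      fun j => tsub_add_tsub_cancel hlc (lcmT_comp_le g _ _)
    simp only [hstep]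
    rw [Fin.sum_univ_two]
    congr 1
    · rw [cons_comp_zero, add_tsub_cancel_right, Fin.val_zero, pow_zero, mul_one]
    · rw [hcomp1]
      norm_num
  have hHd : Hm1 g (epsT g (Finsupp.single w (monomial c a)))
      = Finsupp.single (fun _ : Fin 1 => v)
          (monomial ((c + lcmT g w) - lcmT g (fun _ : Fin 1 => v)) a) := by
    rw [epsT_single, MvPolynomial.monomial_mul, mul_one, Hm1_monomial]
    simp only [hv]
    rw [Finsupp.smul_single, MvPolynomial.smul_monomial, smul_eq_mul, mul_one]
  rw [hdH, hHd, add_assoc, ← Finsupp.single_add, ← map_add]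
  have hco : a * (-1:k)^(1:ℕ) + a = 0 := by ring
  rw [hco, map_zero, Finsupp.single_zero, add_zero]

lemma taylor_homotopy {i : ℕ} (z : TT k σ r (i+1)) :
    dT g (i+1) (HT g (i+1) z) + HT g i (dT g i z) = z := by
  induction z using Finsupp.induction_linear with
  | zero => simp
  | add f h hf hh => simp only [map_add]; rw [add_add_add_comm, hf, hh]
  | single w s =>
    induction s using MvPolynomial.induction_on' with
    | monomial c a => exact key_single g w c a
    | add p q hp hq =>
      simp only [Finsupp.single_add, map_add]
      rw [add_add_add_comm, hp, hq]

lemma taylor_homotopy0 (z : TT k σ r 0) :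
    dT g 0 (HT g 0 z) + Hm1 g (epsT g z) = z := by
  induction z using Finsupp.induction_linear with
  | zero => simp
  | add f h hf hh => simp only [map_add]; rw [add_add_add_comm, hf, hh]
  | single w s =>
    induction s using MvPolynomial.induction_on' with
    | monomial c a => exact key_single0 g w c a
    | add p q hp hq =>
      simp only [Finsupp.single_add, map_add]
      rw [add_add_add_comm, hp, hq]

lemma val_succAbove {m : ℕ} (p : Fin (m+1)) (y : Fin m) :
    ((p.succAbove y : Fin (m+1)) : ℕ) = if (y:ℕ) < (p:ℕ) then (y:ℕ) else (y:ℕ)+1 := by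
  rcases lt_or_ge ((y:ℕ)) ((p:ℕ)) with h | h
  · rw [if_pos h, Fin.succAbove_of_castSucc_lt]
    · rfl
    · simpa [Fin.lt_def] using h
  · rw [if_neg (not_lt.mpr h), Fin.succAbove_of_le_castSucc]
    · rfl
    · simpa [Fin.le_def] using h

lemma succAbove_swap {m : ℕ} (j : Fin (m+2)) (x : Fin (m+1)) (h : (x:ℕ) < (j:ℕ)) :
    (Fin.succAbove j) ∘ (Fin.succAbove x)
      = (Fin.succAbove (⟨(x:ℕ), by omega⟩ : Fin (m+2)))
          ∘ (Fin.succAbove (⟨(j:ℕ)-1, by have := j.isLt; omega⟩ : Fin (m+1))) := by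
  funext y
  apply Fin.ext
  have hy := y.isLt
  have hx := x.isLt
  have hj := j.isLt
  simp only [Function.comp_apply, val_succAbove]
  split_ifs <;> omega

lemma dT_dT_single {i : ℕ} (w : Fin (i+3) → Fin r) :
    dT g i (dT g (i+1) (Finsupp.single w (1 : MvPolynomial σ k))) = 0 := by
  have h1 : (1 : MvPolynomial σ k) = monomial 0 1 := by simp
  rw [h1, dT_single_monomial, map_sum]
  have hterm : ∀ j : Fin (i+3),
      dT g i (Finsupp.single (w ∘ Fin.succAbove j)
        (monomial (0 + (lcmT g w - lcmT g (w ∘ Fin.succAbove j))) ((1:k) * (-1)^(j:ℕ))))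
      = ∑ x : Fin (i+2), Finsupp.single ((w ∘ Fin.succAbove j) ∘ Fin.succAbove x)
          (monomial (lcmT g w - lcmT g ((w ∘ Fin.succAbove j) ∘ Fin.succAbove x))
            ((-1:k)^((j:ℕ)+(x:ℕ)))) := by
    intro j
    rw [dT_single_monomial]
    refine Finset.sum_congr rfl fun x _ => ?_
    rw [zero_add, tsub_add_tsub_cancel (lcmT_comp_le g _ _) (lcmT_comp_le g _ _),
      one_mul, ← pow_add]
  simp only [hterm]
  rw [← Finset.sum_product']
  refine Finset.sum_ninvolution
    (fun p => if h : (p.2:ℕ) < (p.1:ℕ)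
      then ((⟨(p.2:ℕ), by have := p.2.isLt; omega⟩ : Fin (i+3)),
            (⟨(p.1:ℕ)-1, by have := p.1.isLt; omega⟩ : Fin (i+2)))
      else ((⟨(p.2:ℕ)+1, by have := p.2.isLt; omega⟩ : Fin (i+3)),
            (⟨(p.1:ℕ), by have := p.2.isLt; omega⟩ : Fin (i+2))))
    (fun p => ?_) (fun p => ?_) (fun p => Finset.mem_univ _) (fun p => ?_)
  · -- cancellation
    obtain ⟨j, x⟩ := p
    dsimp only
    rcases lt_or_ge ((x:ℕ)) ((j:ℕ)) with hlt | hge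
    · rw [dif_pos hlt]
      have hswap : (w ∘ Fin.succAbove j) ∘ Fin.succAbove x
          = (w ∘ Fin.succAbove (⟨(x:ℕ), by omega⟩ : Fin (i+3)))
              ∘ Fin.succAbove (⟨(j:ℕ)-1, by have := j.isLt; omega⟩ : Fin (i+2)) := by
        rw [Function.comp_assoc, Function.comp_assoc, succAbove_swap j x hlt]
      rw [hswap]
      rw [← Finsupp.single_add, ← map_add]
      simp only [Fin.val_mk]
      have hco : (-1:k)^((j:ℕ)+(x:ℕ)) + (-1)^((x:ℕ) + ((j:ℕ)-1)) = 0 := by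
        have h4 : (j:ℕ)+(x:ℕ) = ((x:ℕ) + ((j:ℕ)-1)) + 1 := by omega
        rw [h4, pow_succ]
        ring
      rw [hco, map_zero, Finsupp.single_zero]
    · rw [dif_neg (not_lt.mpr hge)]
      have hlt2 : ((⟨(j:ℕ), by have := x.isLt; omega⟩ : Fin (i+2)) : ℕ)
          < ((⟨(x:ℕ)+1, by have := x.isLt; omega⟩ : Fin (i+3)) : ℕ) := by
        show (j:ℕ) < (x:ℕ)+1
        omega
      have hswap : (w ∘ Fin.succAbove (⟨(x:ℕ)+1, by have := x.isLt; omega⟩ : Fin (i+3)))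
            ∘ Fin.succAbove (⟨(j:ℕ), by have := x.isLt; omega⟩ : Fin (i+2))
          = (w ∘ Fin.succAbove j) ∘ Fin.succAbove x := by
        rw [Function.comp_assoc, Function.comp_assoc,
          succAbove_swap _ _ hlt2]
        congr 2 <;> apply Fin.ext <;> simp <;> omega
      rw [hswap]
      rw [← Finsupp.single_add, ← map_add]
      simp only [Fin.val_mk]
      have hco : (-1:k)^((j:ℕ)+(x:ℕ)) + (-1)^(((x:ℕ)+1) + (j:ℕ)) = 0 := by
        have h4 : ((x:ℕ)+1) + (j:ℕ) = ((j:ℕ)+(x:ℕ)) + 1 := by omega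
        rw [h4, pow_succ]
        ring
      rw [hco, map_zero, Finsupp.single_zero]
  · -- no fixed points
    intro hne
    obtain ⟨j, x⟩ := p
    dsimp only
    split_ifs with hlt
    · intro he
      have := congrArg (fun q => ((q.1 : ℕ), (q.2 : ℕ))) he
      simp at this
      omega
    · intro he
      have := congrArg (fun q => ((q.1 : ℕ), (q.2 : ℕ))) he
      simp at this
      omega
  · -- involution
    obtain ⟨j, x⟩ := p
    dsimp only
    rcases lt_or_ge ((x:ℕ)) ((j:ℕ)) with hlt | hge
    · rw [dif_pos hlt]
      rw [dif_neg (by show ¬ ((j:ℕ)-1 < (x:ℕ)); omega)]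
      refine Prod.ext ?_ ?_ <;> apply Fin.ext <;> show _ = _ <;> simp <;> omega
    · rw [dif_neg (not_lt.mpr hge)]
      rw [dif_pos (by show (j:ℕ) < (x:ℕ)+1; omega)]
      refine Prod.ext ?_ ?_ <;> apply Fin.ext <;> show _ = _ <;> simp <;> omega

lemma epsT_dT_single (w : Fin 2 → Fin r) :
    epsT g (dT g 0 (Finsupp.single w (1 : MvPolynomial σ k))) = 0 := by
  have h1 : (1 : MvPolynomial σ k) = monomial 0 1 := by simp
  rw [h1, dT_single_monomial, map_sum, Fin.sum_univ_two]
  rw [epsT_single, epsT_single]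
  rw [MvPolynomial.monomial_mul, MvPolynomial.monomial_mul]
  have e0 : 0 + (lcmT g w - lcmT g (w ∘ Fin.succAbove 0)) + lcmT g (w ∘ Fin.succAbove 0)
      = lcmT g w := by
    rw [zero_add, tsub_add_cancel_of_le (lcmT_comp_le g _ _)]
  have e1 : 0 + (lcmT g w - lcmT g (w ∘ Fin.succAbove 1)) + lcmT g (w ∘ Fin.succAbove 1)
      = lcmT g w := by
    rw [zero_add, tsub_add_cancel_of_le (lcmT_comp_le g _ _)]
  rw [e0, e1, ← map_add]
  norm_num

section MDeg

variable (k σ)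

/-- Elements of a free module over the polynomial ring, all of whose "total degrees"
(monomial degree plus degree of the basis element) equal `m`. -/
def MDeg {β : Type} (dg : β → ℕ) (m : ℕ) : Submodule k (β →₀ MvPolynomial σ k) where
  carrier := {t | ∀ b, ∀ c ∈ (t b).support, degE c + dg b = m}
  zero_mem' := by intro b c hc; simp at hc
  add_mem' := by
    intro t u ht hu b c hc
    rcases Finset.mem_union.mp (MvPolynomial.support_add (Finsupp.add_apply t u b ▸ hc)) with h | h
    · exact ht b c h
    · exact hu b c h
  smul_mem' := by
    intro a t ht b c hc
    rw [Finsupp.smul_apply] at hc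
    exact ht b c (MvPolynomial.support_smul hc)

variable {k σ}

lemma mem_MDeg {β : Type} {dg : β → ℕ} {m : ℕ} {t : β →₀ MvPolynomial σ k} :
    t ∈ MDeg k σ dg m ↔ ∀ b, ∀ c ∈ (t b).support, degE c + dg b = m := Iff.rfl

lemma single_mem_MDeg {β : Type} {dg : β → ℕ} {m : ℕ} {b : β} {s : MvPolynomial σ k}
    (h : ∀ c ∈ s.support, degE c + dg b = m) : Finsupp.single b s ∈ MDeg k σ dg m := by
  intro b' c hc
  rcases eq_or_ne b b' with rfl | hne
  · rw [Finsupp.single_eq_same] at hc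
    exact h c hc
  · rw [Finsupp.single_eq_of_ne' hne] at hc
    simp at hc

lemma single_monomial_mem_MDeg {β : Type} {dg : β → ℕ} {b : β} {c : σ →₀ ℕ} {a : k}
    (h : True) : Finsupp.single b (monomial c a) ∈ MDeg k σ dg (degE c + dg b) := by
  apply single_mem_MDeg
  intro c' hc'
  have := MvPolynomial.support_monomial_subset hc'
  rw [Finset.mem_singleton] at this
  rw [this]

lemma MDeg_split_single {β : Type} {dg : β → ℕ} {m : ℕ} {b : β} {s : MvPolynomial σ k}
    {f : β →₀ MvPolynomial σ k} (hb : b ∉ f.support)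
    (h : Finsupp.single b s + f ∈ MDeg k σ dg m) :
    Finsupp.single b s ∈ MDeg k σ dg m ∧ f ∈ MDeg k σ dg m := by
  have hfb : f b = 0 := Finsupp.notMem_support_iff.mp hb
  constructor
  · apply single_mem_MDeg
    intro c hc
    have : c ∈ ((Finsupp.single b s + f) b).support := by
      rw [Finsupp.add_apply, Finsupp.single_eq_same, hfb, add_zero]
      exact hc
    exact h b c this
  · intro b' c hc
    rcases eq_or_ne b b' with rfl | hne
    · rw [hfb] at hc; simp at hc
    · have : c ∈ ((Finsupp.single b s + f) b').support := by
        rw [Finsupp.add_apply, Finsupp.single_eq_of_ne' hne, zero_add]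
        exact hc
      exact h b' c this

/-- Decompose the polynomial coefficient of `single b s` into monomials. -/
lemma single_eq_sum_monomials {β : Type} (b : β) (s : MvPolynomial σ k) :
    Finsupp.single b s
      = ∑ c ∈ s.support, Finsupp.single b (monomial c (MvPolynomial.coeff c s)) := by
  have h1 : s = ∑ c ∈ s.support, monomial c (MvPolynomial.coeff c s) :=
    (MvPolynomial.support_sum_monomial_coeff s).symm
  calc Finsupp.single b s = Finsupp.lsingle (R := MvPolynomial σ k) b s := rfl
  _ = Finsupp.lsingle (R := MvPolynomial σ k) b
      (∑ c ∈ s.support, monomial c (MvPolynomial.coeff c s)) := by rw [← h1]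
  _ = _ := by rw [map_sum]; rfl

/-- A linear map taking basis elements into the right strands preserves strands. -/
lemma MDeg_map {β γ : Type} {dgβ : β → ℕ} {dgγ : γ → ℕ}
    (L : (β →₀ MvPolynomial σ k) →ₗ[MvPolynomial σ k] (γ →₀ MvPolynomial σ k))
    (hL : ∀ b, L (Finsupp.single b 1) ∈ MDeg k σ dgγ (dgβ b)) {m : ℕ}
    {t : β →₀ MvPolynomial σ k} (ht : t ∈ MDeg k σ dgβ m) : L t ∈ MDeg k σ dgγ m := by
  induction t using Finsupp.induction with
  | zero => rw [map_zero]; exact Submodule.zero_mem _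
  | single_add b s f hbf hs ih =>
    obtain ⟨h1, h2⟩ := MDeg_split_single hbf ht
    rw [map_add]
    refine Submodule.add_mem _ ?_ (ih h2)
    rw [single_eq_sum_monomials, map_sum]
    refine Submodule.sum_mem _ fun c hc => ?_
    have hdc : degE c + dgβ b = m := h1 b c (by
      rw [Finsupp.single_eq_same]; exact hc)
    have hsm : Finsupp.single b (monomial c (MvPolynomial.coeff c s))
        = (monomial c (MvPolynomial.coeff c s) : MvPolynomial σ k) • Finsupp.single b 1 := by
      rw [Finsupp.smul_single', mul_one]
    rw [hsm, map_smul]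
    -- monomial-smul shifts strands by degE c
    have key : ∀ u ∈ MDeg k σ dgγ (dgβ b),
        (monomial c (MvPolynomial.coeff c s) : MvPolynomial σ k) • u ∈ MDeg k σ dgγ m := by
      intro u hu b' c' hc'
      rw [Finsupp.smul_apply, smul_eq_mul] at hc'
      have hsub := MvPolynomial.support_mul _ _ hc'
      rw [Finset.mem_add] at hsub
      obtain ⟨c1, hc1, c2, hc2, hsum⟩ := hsub
      have hc1' := MvPolynomial.support_monomial_subset hc1
      rw [Finset.mem_singleton] at hc1'
      subst hc1'
      have h2 := hu b' c2 hc2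
      rw [← hsum, degE_add]
      omega
    exact key _ (hL b)

end MDeg

section Preserve

variable {r : ℕ} (g : Fin r → (σ →₀ ℕ))

/-- degree of the basis element `e_w` of the Taylor complex -/
noncomputable def degT {m : ℕ} (w : Fin m → Fin r) : ℕ := degE (lcmT g w)

lemma MDeg_map_k {β γ : Type} {dgβ : β → ℕ} {dgγ : γ → ℕ}
    (L : (β →₀ MvPolynomial σ k) →ₗ[k] (γ →₀ MvPolynomial σ k))
    (hL : ∀ b c (a : k), L (Finsupp.single b (monomial c a)) ∈ MDeg k σ dgγ (degE c + dgβ b))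
    {m : ℕ} {t : β →₀ MvPolynomial σ k} (ht : t ∈ MDeg k σ dgβ m) :
    L t ∈ MDeg k σ dgγ m := by
  induction t using Finsupp.induction with
  | zero => rw [map_zero]; exact Submodule.zero_mem _
  | single_add b s f hbf hs ih =>
    obtain ⟨h1, h2⟩ := MDeg_split_single hbf ht
    rw [map_add]
    refine Submodule.add_mem _ ?_ (ih h2)
    rw [single_eq_sum_monomials, map_sum]
    refine Submodule.sum_mem _ fun c hc => ?_
    have hdc : degE c + dgβ b = m := h1 b c (by rw [Finsupp.single_eq_same]; exact hc)
    rw [← hdc]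
    exact hL b c _

lemma dval_mem_MDeg {i : ℕ} (u : Fin (i+2) → Fin r) :
    dval g u ∈ MDeg k σ (degT g) (degT g u) := by
  rw [dval]
  refine Submodule.sum_mem _ fun j _ => ?_
  have hle : lcmT g (u ∘ Fin.succAbove j) ≤ lcmT g u := lcmT_comp_le g _ _
  have hdeg : degE (lcmT g u - lcmT g (u ∘ Fin.succAbove j)) + degT g (u ∘ Fin.succAbove j)
      = degT g u := by
    rw [degT, degT, degE_tsub hle]
    have := degE_mono (σ := σ) hle
    omega
  rw [← hdeg]
  exact single_monomial_mem_MDeg trivial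

lemma dT_mem_MDeg {i : ℕ} {m : ℕ} {t : TT k σ r (i+1)} (ht : t ∈ MDeg k σ (degT g) m) :
    dT g i t ∈ MDeg k σ (degT g) m := by
  refine MDeg_map (dT g i) (fun w => ?_) ht
  rw [dT_single, one_smul]
  exact dval_mem_MDeg g w

lemma Hval_mem_MDeg {i : ℕ} (w : Fin (i+1) → Fin r) (c : σ →₀ ℕ) :
    Hval g w c ∈ MDeg k σ (degT g) (degE c + degT g w) := by
  rw [Hval]
  rcases h : apex g (c + lcmT g w) with _ | v
  · exact Submodule.zero_mem _
  · have hgv : g v ≤ c + lcmT g w := apex_le g h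
    have hlc : lcmT g (Fin.cons v w) ≤ c + lcmT g w := by
      apply lcmT_le
      intro x
      induction x using Fin.cases with
      | zero => simpa using hgv
      | succ y => simpa using le_trans (g_le_lcmT g w y) (le_add_self : lcmT g w ≤ c + lcmT g w)
    have hdeg : degE ((c + lcmT g w) - lcmT g (Fin.cons v w)) + degT g (Fin.cons v w)
        = degE c + degT g w := by
      rw [degT, degT, degE_tsub hlc]
      have h1 := degE_mono (σ := σ) hlc
      have h2 : degE (c + lcmT g w) = degE c + degE (lcmT g w) := degE_add _ _
      omega
    rw [← hdeg]
    exact single_monomial_mem_MDeg trivial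

lemma HT_mem_MDeg {i : ℕ} {m : ℕ} {t : TT k σ r i} (ht : t ∈ MDeg k σ (degT g) m) :
    HT g i t ∈ MDeg k σ (degT g) m := by
  refine MDeg_map_k (HT g i) (fun w c a => ?_) ht
  rw [HT_single]
  exact Submodule.smul_mem _ _ (Hval_mem_MDeg g w c)

lemma Hm1_mem_MDeg {m : ℕ} {x : MvPolynomial σ k} (hx : ∀ c ∈ x.support, degE c = m) :
    Hm1 g x ∈ MDeg k σ (degT g) m := by
  have h1 : x = ∑ c ∈ x.support, monomial c (MvPolynomial.coeff c x) :=
    (MvPolynomial.support_sum_monomial_coeff x).symm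
  rw [h1, map_sum]
  refine Submodule.sum_mem _ fun c hc => ?_
  rw [Hm1_monomial]
  refine Submodule.smul_mem _ _ ?_
  rcases h : apex g c with _ | v
  · exact Submodule.zero_mem _
  · have hgv : g v ≤ c := apex_le g h
    have hlc : lcmT g (fun _ : Fin 1 => v) ≤ c := lcmT_le g _ (fun _ => hgv)
    have hdeg : degE (c - lcmT g (fun _ : Fin 1 => v)) + degT g (fun _ : Fin 1 => v)
        = m := by
      rw [degT, degE_tsub hlc]
      have h1 := degE_mono (σ := σ) hlc
      have h2 := hx c hc
      omega
    rw [← hdeg]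
    exact single_monomial_mem_MDeg trivial

end Preserve

section MoreTaylor

variable {r : ℕ} (g : Fin r → (σ →₀ ℕ))

lemma lin_ext_basis {β : Type} {N : Type} [AddCommMonoid N] [Module (MvPolynomial σ k) N]
    {L L' : (β →₀ MvPolynomial σ k) →ₗ[MvPolynomial σ k] N}
    (h : ∀ b, L (Finsupp.single b 1) = L' (Finsupp.single b 1)) : L = L' := by
  refine Finsupp.lhom_ext fun a b => ?_
  have hb : (Finsupp.single a b : β →₀ MvPolynomial σ k) = b • Finsupp.single a 1 := by
    rw [Finsupp.smul_single', mul_one]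
  rw [hb, map_smul, map_smul, h]

lemma smul_single_one {β : Type} (b : β) (s : MvPolynomial σ k) :
    (Finsupp.single b s : β →₀ MvPolynomial σ k) = s • Finsupp.single b 1 := by
  rw [Finsupp.smul_single', mul_one]

lemma dT_dT {i : ℕ} (z : TT k σ r (i+2)) : dT g i (dT g (i+1) z) = 0 := by
  have h : (dT g i) ∘ₗ (dT g (i+1)) = (0 : TT k σ r (i+2) →ₗ[MvPolynomial σ k] TT k σ r i) := by
    apply lin_ext_basis
    intro w
    simp only [LinearMap.comp_apply, LinearMap.zero_apply]
    exact dT_dT_single g w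
  exact DFunLike.congr_fun h z

lemma epsT_dT (z : TT k σ r 1) : epsT g (dT g 0 z) = 0 := by
  have h : (epsT g) ∘ₗ (dT g 0) = (0 : TT k σ r 1 →ₗ[MvPolynomial σ k] MvPolynomial σ k) := by
    apply lin_ext_basis
    intro w
    simp only [LinearMap.comp_apply, LinearMap.zero_apply]
    exact epsT_dT_single g w
  exact DFunLike.congr_fun h z

lemma lcmT_fin1 (w : Fin 1 → Fin r) : lcmT g w = g (w 0) := by
  refine le_antisymm (lcmT_le g w fun x => ?_) (g_le_lcmT g w 0)
  rw [Fin.fin_one_eq_zero x]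

lemma epsT_Hm1 {x : MvPolynomial σ k} (hx : ∀ c ∈ x.support, ∃ a, g a ≤ c) :
    epsT g (Hm1 g x) = x := by
  have h1 : x = ∑ c ∈ x.support, monomial c (MvPolynomial.coeff c x) :=
    (MvPolynomial.support_sum_monomial_coeff x).symm
  conv_lhs => rw [h1, map_sum, map_sum]
  conv_rhs => rw [h1]
  refine Finset.sum_congr rfl fun c hc => ?_
  obtain ⟨a, ha⟩ := hx c hc
  obtain ⟨v, hv⟩ := apex_isSome g ha
  have hgv : g v ≤ c := apex_le g hv
  rw [Hm1_monomial]
  simp only [hv]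
  rw [Finsupp.smul_single, MvPolynomial.smul_monomial, smul_eq_mul, mul_one, epsT_single,
    MvPolynomial.monomial_mul, mul_one]
  congr 1
  rw [tsub_add_cancel_of_le]
  exact lcmT_le g _ (fun x => hgv)

/-- Expansion of an `S`-linear map from a `Finsupp` module. -/
lemma linmap_expand {β γ : Type}
    (L : (β →₀ MvPolynomial σ k) →ₗ[MvPolynomial σ k] (γ →₀ MvPolynomial σ k))
    (x : β →₀ MvPolynomial σ k) :
    L x = x.sum fun b s => s • L (Finsupp.single b 1) := by
  conv_lhs => rw [← Finsupp.sum_single x, map_finsuppSum]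
  refine Finsupp.sum_congr fun b _ => ?_
  rw [smul_single_one b (x b), map_smul]

/-- If all coordinates of `x` have zero constant coefficient, so do those of `L x`,
for any `S`-linear `L`. -/
lemma cc_apply_of_cc {β γ : Type}
    (L : (β →₀ MvPolynomial σ k) →ₗ[MvPolynomial σ k] (γ →₀ MvPolynomial σ k))
    {x : β →₀ MvPolynomial σ k} (hx : ∀ b, constantCoeff (x b) = 0) (q : γ) :
    constantCoeff ((L x) q) = 0 := by
  rw [linmap_expand L x, Finsupp.sum_apply]
  rw [Finsupp.sum]
  rw [map_sum]
  refine Finset.sum_eq_zero fun b _ => ?_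
  rw [Finsupp.smul_apply, smul_eq_mul, map_mul, hx b, zero_mul]

/-- Elements of a strand of total degree `j` bigger than all generator degrees have
zero constant coefficients. -/
lemma cc_of_mem_MDeg {β : Type} {dg : β → ℕ} {j : ℕ} {x : β →₀ MvPolynomial σ k}
    (hx : x ∈ MDeg k σ dg j) (hdg : ∀ b, dg b < j) (b : β) :
    constantCoeff (x b) = 0 := by
  rw [constantCoeff_eq]
  by_contra hc
  have h0 : (0 : σ →₀ ℕ) ∈ (x b).support := MvPolynomial.mem_support_iff.mpr hc
  have := hx b 0 h0
  have hd : degE (0 : σ →₀ ℕ) = 0 := by simp [degE]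
  rw [hd, zero_add] at this
  exact absurd this (Nat.ne_of_lt (hdg b))

end MoreTaylor

section Lift

variable {r : ℕ} (g : Fin r → (σ →₀ ℕ)) {I : Ideal (MvPolynomial σ k)}
  {B : ℕ → ℕ → ℕ} (R : MinFreeRes k σ I B)

lemma cc_apply_of_basis_cc {β γ : Type}
    (L : (β →₀ MvPolynomial σ k) →ₗ[MvPolynomial σ k] (γ →₀ MvPolynomial σ k))
    (hL : ∀ b q', constantCoeff ((L (Finsupp.single b 1)) q') = 0)
    (f : β →₀ MvPolynomial σ k) (q : γ) : constantCoeff ((L f) q) = 0 := by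
  rw [linmap_expand, Finsupp.sum_apply, Finsupp.sum, map_sum]
  refine Finset.sum_eq_zero fun b _ => ?_
  rw [Finsupp.smul_apply, smul_eq_mul, map_mul, hL b, mul_zero]

lemma dF_dF (i : ℕ) (x : FreeMod k σ (B (i+2))) : R.d i (R.d (i+1) x) = 0 := by
  have h : R.d (i+1) x ∈ LinearMap.range (R.d (i+1)) := LinearMap.mem_range_self _ x
  rw [← R.exact i] at h
  exact h

lemma eps_dF (x : FreeMod k σ (B 1)) : R.ε (R.d 0 x) = 0 := by
  have h : R.d 0 x ∈ LinearMap.range (R.d 0) := LinearMap.mem_range_self _ x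
  rw [← R.exact₀] at h
  exact h

lemma cc_dF_basis (i : ℕ) (p : (j : ℕ) × Fin (B (i+1) j)) (q : (j : ℕ) × Fin (B i j)) :
    constantCoeff ((R.d i (Finsupp.single p 1)) q) = 0 := by
  rcases le_or_gt p.1 q.1 with h | h
  · rw [R.minimal i p q h, map_zero]
  · exact cc_of_homog (R.graded_d i p q) (by omega)

lemma dF_basis_mem_MDeg (i : ℕ) (p : (j : ℕ) × Fin (B (i+1) j)) :
    R.d i (Finsupp.single p 1) ∈ MDeg k σ (fun q => q.1) p.1 := by
  intro q c hc
  rcases le_or_gt p.1 q.1 with h | h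
  · rw [R.minimal i p q h] at hc
    simp at hc
  · have := homog_support_degE (R.graded_d i p q) hc
    show degE c + q.1 = p.fst
    omega

/-- The graded chain lift from the minimal resolution to the Taylor complex. -/
noncomputable def phi : (i : ℕ) → (FreeMod k σ (B i) →ₗ[MvPolynomial σ k] TT k σ r i)
  | 0 => mkLin fun p => Hm1 g (R.ε (Finsupp.single p 1))
  | (i+1) => mkLin fun p => HT g i (phi i (R.d i (Finsupp.single p 1)))

lemma phi_zero_single (p : (j : ℕ) × Fin (B 0 j)) :
    phi g R 0 (Finsupp.single p 1) = Hm1 g (R.ε (Finsupp.single p 1)) := by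
  rw [phi, mkLin_single, one_smul]

lemma phi_succ_single (i : ℕ) (p : (j : ℕ) × Fin (B (i+1) j)) :
    phi g R (i+1) (Finsupp.single p 1)
      = HT g i (phi g R i (R.d i (Finsupp.single p 1))) := by
  rw [phi, mkLin_single, one_smul]

lemma phi_graded : ∀ i (p : (j : ℕ) × Fin (B i j)),
    phi g R i (Finsupp.single p 1) ∈ MDeg k σ (degT g) p.1 := by
  intro i
  induction i with
  | zero =>
    intro p
    rw [phi_zero_single]
    exact Hm1_mem_MDeg g (fun c hc => homog_support_degE (R.graded_ε p) hc)
  | succ i ih =>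
    intro p
    rw [phi_succ_single]
    exact HT_mem_MDeg g (MDeg_map (phi g R i) ih (dF_basis_mem_MDeg R i p))

variable (hdiv : ∀ x ∈ I, ∀ c ∈ x.support, ∃ a : Fin r, g a ≤ c)

include hdiv in
lemma phi_chain0 : (epsT g) ∘ₗ phi g R 0 = R.ε := by
  apply lin_ext_basis
  intro p
  rw [LinearMap.comp_apply, phi_zero_single]
  refine epsT_Hm1 g (hdiv _ ?_)
  have h1 : R.ε (Finsupp.single p 1) ∈ LinearMap.range R.ε := LinearMap.mem_range_self _ _
  rwa [R.range_ε] at h1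

include hdiv in
lemma phi_chain : ∀ i, (dT g i) ∘ₗ phi g R (i+1) = (phi g R i) ∘ₗ (R.d i) := by
  intro i
  induction i with
  | zero =>
    apply lin_ext_basis
    intro p
    rw [LinearMap.comp_apply, LinearMap.comp_apply, phi_succ_single]
    have hh := taylor_homotopy0 g (phi g R 0 (R.d 0 (Finsupp.single p 1)))
    have he : epsT g (phi g R 0 (R.d 0 (Finsupp.single p 1))) = 0 := by
      rw [← LinearMap.comp_apply, phi_chain0 g R hdiv]
      exact eps_dF R _
    rw [he, map_zero, add_zero] at hh
    exact hh
  | succ i ih =>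
    apply lin_ext_basis
    intro p
    rw [LinearMap.comp_apply, LinearMap.comp_apply, phi_succ_single]
    have hh := taylor_homotopy g (phi g R (i+1) (R.d (i+1) (Finsupp.single p 1)))
    have he : dT g i (phi g R (i+1) (R.d (i+1) (Finsupp.single p 1))) = 0 := by
      rw [← LinearMap.comp_apply, ih, LinearMap.comp_apply, dF_dF R i, map_zero]
    rw [he, map_zero, add_zero] at hh
    exact hh

end Lift

section Psi

variable {r : ℕ} (g : Fin r → (σ →₀ ℕ)) {I : Ideal (MvPolynomial σ k)}
  {B : ℕ → ℕ → ℕ} (R : MinFreeRes k σ I B)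
  (hdiv : ∀ x ∈ I, ∀ c ∈ x.support, ∃ a : Fin r, g a ≤ c)
  (hgen : ∀ a : Fin r, (monomial (g a) 1 : MvPolynomial σ k) ∈ I)

include hgen in
lemma psi0_ex (w : Fin 1 → Fin r) : ∃ u : FreeMod k σ (B 0), R.ε u = monomial (lcmT g w) 1 := by
  have h1 : (monomial (lcmT g w) 1 : MvPolynomial σ k) ∈ I := by
    rw [lcmT_fin1]; exact hgen (w 0)
  rw [← R.range_ε] at h1
  exact h1

/-- Start of the chain lift from the Taylor complex to the minimal resolution. -/
noncomputable def psi0 : TT k σ r 0 →ₗ[MvPolynomial σ k] FreeMod k σ (B 0) :=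
  mkLin fun w => Classical.choose (psi0_ex g R hgen w)

lemma psi0_eps : R.ε ∘ₗ psi0 g R hgen = epsT g := by
  apply lin_ext_basis
  intro w
  rw [LinearMap.comp_apply, psi0, mkLin_single, one_smul,
    Classical.choose_spec (psi0_ex g R hgen w), epsT_single, one_mul]

/-- The inductive invariant for constructing `ψ`. -/
def Good (i : ℕ) (ψ : TT k σ r i →ₗ[MvPolynomial σ k] FreeMod k σ (B i)) : Prop :=
  ∀ w : Fin (i+2) → Fin r, ψ (dT g i (Finsupp.single w 1)) ∈ LinearMap.range (R.d i)

lemma psi0_good : Good g R 0 (psi0 g R hgen) := by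
  intro w
  rw [← R.exact₀]
  rw [LinearMap.mem_ker, ← LinearMap.comp_apply, psi0_eps, epsT_dT]

noncomputable def psiStep {i : ℕ} (ψ : TT k σ r i →ₗ[MvPolynomial σ k] FreeMod k σ (B i))
    (hψ : Good g R i ψ) : TT k σ r (i+1) →ₗ[MvPolynomial σ k] FreeMod k σ (B (i+1)) :=
  mkLin fun w => Classical.choose (hψ w)

lemma psiStep_chain {i : ℕ} (ψ : TT k σ r i →ₗ[MvPolynomial σ k] FreeMod k σ (B i))
    (hψ : Good g R i ψ) : R.d i ∘ₗ psiStep g R ψ hψ = ψ ∘ₗ dT g i := by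
  apply lin_ext_basis
  intro w
  rw [LinearMap.comp_apply, LinearMap.comp_apply, psiStep, mkLin_single, one_smul]
  exact Classical.choose_spec (hψ w)

lemma psiStep_good {i : ℕ} (ψ : TT k σ r i →ₗ[MvPolynomial σ k] FreeMod k σ (B i))
    (hψ : Good g R i ψ) : Good g R (i+1) (psiStep g R ψ hψ) := by
  intro w
  rw [← R.exact i, LinearMap.mem_ker, ← LinearMap.comp_apply, psiStep_chain,
    LinearMap.comp_apply, dT_dT, map_zero]

noncomputable def psiP : (i : ℕ) →
    {ψ : TT k σ r i →ₗ[MvPolynomial σ k] FreeMod k σ (B i) // Good g R i ψ}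
  | 0 => ⟨psi0 g R hgen, psi0_good g R hgen⟩
  | (i+1) => ⟨psiStep g R (psiP i).1 (psiP i).2, psiStep_good g R _ _⟩

lemma psiP_chain (i : ℕ) :
    R.d i ∘ₗ (psiP g R hgen (i+1)).1 = (psiP g R hgen i).1 ∘ₗ dT g i := by
  show R.d i ∘ₗ psiStep g R (psiP g R hgen i).1 (psiP g R hgen i).2 = _
  exact psiStep_chain g R _ _

lemma psiP_eps : R.ε ∘ₗ (psiP g R hgen 0).1 = epsT g := psi0_eps g R hgen

/-- The chain self-map `1 - ψ ∘ φ` of the minimal resolution. -/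
noncomputable def theta (i : ℕ) :
    FreeMod k σ (B i) →ₗ[MvPolynomial σ k] FreeMod k σ (B i) :=
  LinearMap.id - (psiP g R hgen i).1 ∘ₗ phi g R i

include hdiv in
lemma theta_eps : R.ε ∘ₗ theta g R hgen 0 = 0 := by
  rw [theta, LinearMap.comp_sub, LinearMap.comp_id, ← LinearMap.comp_assoc, psiP_eps,
    phi_chain0 g R hdiv, sub_self]

include hdiv in
lemma theta_chain (i : ℕ) :
    R.d i ∘ₗ theta g R hgen (i+1) = theta g R hgen i ∘ₗ R.d i := by
  rw [theta, theta, LinearMap.comp_sub, LinearMap.sub_comp, LinearMap.comp_id,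
    LinearMap.id_comp, ← LinearMap.comp_assoc, psiP_chain, LinearMap.comp_assoc,
    phi_chain g R hdiv, ← LinearMap.comp_assoc]

include hdiv in
lemma h0_ex (p : (j : ℕ) × Fin (B 0 j)) :
    ∃ u, R.d 0 u = theta g R hgen 0 (Finsupp.single p 1) := by
  have h1 : theta g R hgen 0 (Finsupp.single p 1) ∈ LinearMap.ker R.ε := by
    rw [LinearMap.mem_ker, ← LinearMap.comp_apply, theta_eps g R hdiv hgen,
      LinearMap.zero_apply]
  rw [R.exact₀] at h1
  exact h1

include hdiv in
lemma hstep_ex {i : ℕ} (h : FreeMod k σ (B i) →ₗ[MvPolynomial σ k] FreeMod k σ (B (i+1)))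
    (ρ : FreeMod k σ (B i) →ₗ[MvPolynomial σ k] FreeMod k σ (B i))
    (hinv : R.d i ∘ₗ h + ρ = theta g R hgen i)
    (hvan : ∀ x ∈ LinearMap.range (R.d i), ρ x = 0)
    (p : (j : ℕ) × Fin (B (i+1) j)) :
    ∃ u, R.d (i+1) u
      = theta g R hgen (i+1) (Finsupp.single p 1) - h (R.d i (Finsupp.single p 1)) := by
  have hk : theta g R hgen (i+1) (Finsupp.single p 1) - h (R.d i (Finsupp.single p 1))
      ∈ LinearMap.ker (R.d i) := by
    rw [LinearMap.mem_ker, map_sub]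
    have h1 : R.d i (theta g R hgen (i+1) (Finsupp.single p 1))
        = theta g R hgen i (R.d i (Finsupp.single p 1)) := by
      rw [← LinearMap.comp_apply, theta_chain g R hdiv hgen, LinearMap.comp_apply]
    have h2 := DFunLike.congr_fun hinv (R.d i (Finsupp.single p 1))
    rw [LinearMap.add_apply, LinearMap.comp_apply] at h2
    have h3 : ρ (R.d i (Finsupp.single p 1)) = 0 :=
      hvan _ (LinearMap.mem_range_self _ _)
    rw [h3, add_zero] at h2
    rw [h1, h2, sub_self]
  rw [R.exact i] at hk
  exact hk

/-- Homotopy data exhibiting `θ = d ∘ h + ρ` with controlled `ρ`. -/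
structure HPack (i : ℕ) where
  h : FreeMod k σ (B i) →ₗ[MvPolynomial σ k] FreeMod k σ (B (i+1))
  ρ : FreeMod k σ (B i) →ₗ[MvPolynomial σ k] FreeMod k σ (B i)
  inv : R.d i ∘ₗ h + ρ = theta g R hgen i
  van : ∀ x ∈ LinearMap.range (R.d i), ρ x = 0
  ccz : ∀ p q, constantCoeff ((ρ (Finsupp.single p 1)) q) = 0

noncomputable def hP : (i : ℕ) → HPack g R hgen i
  | 0 =>
    { h := mkLin fun p => Classical.choose (h0_ex g R hdiv hgen p)
      ρ := 0
      inv := by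
        apply lin_ext_basis
        intro p
        rw [LinearMap.add_apply, LinearMap.comp_apply, LinearMap.zero_apply, add_zero,
          mkLin_single, one_smul]
        exact Classical.choose_spec (h0_ex g R hdiv hgen p)
      van := fun x _ => rfl
      ccz := fun p q => by simp }
  | (i+1) =>
    { h := mkLin fun p => Classical.choose
        (hstep_ex g R hdiv hgen (hP i).h (hP i).ρ (hP i).inv (hP i).van p)
      ρ := (hP i).h ∘ₗ R.d i
      inv := by
        apply lin_ext_basis
        intro p
        rw [LinearMap.add_apply, LinearMap.comp_apply, LinearMap.comp_apply,
          mkLin_single, one_smul,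
          Classical.choose_spec
            (hstep_ex g R hdiv hgen (hP i).h (hP i).ρ (hP i).inv (hP i).van p),
          sub_add_cancel]
      van := by
        rintro x ⟨y, rfl⟩
        rw [LinearMap.comp_apply, dF_dF, map_zero]
      ccz := fun p q => by
        rw [LinearMap.comp_apply]
        exact cc_apply_of_cc (hP i).h (fun b => cc_dF_basis R i p b) q }

include R hdiv hgen in
theorem betti_vanish (D : ℕ)
    (hdeg : ∀ (i : ℕ) (w : Fin (i+1) → Fin r), degT g w < D + i)
    (i j : ℕ) (hj : D + i ≤ j) (hB : B i j ≠ 0) : False := by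
  set p : (j' : ℕ) × Fin (B i j') := ⟨j, ⟨0, Nat.pos_of_ne_zero hB⟩⟩ with hp
  set ep : FreeMod k σ (B i) := Finsupp.single p 1 with hep
  have hpack := hP g R hdiv hgen i
  have hinv := DFunLike.congr_fun hpack.inv ep
  rw [LinearMap.add_apply, LinearMap.comp_apply] at hinv
  have hccd : constantCoeff ((R.d i (hpack.h ep)) p) = 0 :=
    cc_apply_of_basis_cc (R.d i) (fun b q' => cc_dF_basis R i b q') (hpack.h ep) p
  have hccρ : constantCoeff ((hpack.ρ ep) p) = 0 := hpack.ccz p p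
  have hccψ : constantCoeff (((psiP g R hgen i).1 (phi g R i ep)) p) = 0 := by
    refine cc_apply_of_cc (psiP g R hgen i).1 (fun w => ?_) p
    refine cc_of_mem_MDeg (phi_graded g R i p) (fun w' => ?_) w
    calc degT g w' < D + i := hdeg i w'
    _ ≤ j := hj
  have hθ : constantCoeff ((theta g R hgen i ep) p) = 1 := by
    rw [theta, LinearMap.sub_apply, LinearMap.id_apply, LinearMap.comp_apply,
      Finsupp.sub_apply, map_sub, hccψ, sub_zero, hep, Finsupp.single_eq_same, map_one]
  have hcontr := congrArg (fun z => constantCoeff (z p)) hinv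
  simp only [Finsupp.add_apply, map_add] at hcontr
  rw [hccd, hccρ, add_zero, hθ] at hcontr
  exact zero_ne_one hcontr

end Psi

section Glue

lemma squarefree_le_ones {n : ℕ} {s : (Fin n ⊕ Fin n) →₀ ℕ} (hsq : ∀ v, s v ≤ 1) :
    s ≤ Finsupp.equivFunOnFinite.symm (fun _ => 1) := by
  rw [Finsupp.le_def]
  intro v
  simpa using hsq v

lemma degE_ones {n : ℕ} :
    degE (Finsupp.equivFunOnFinite.symm (fun _ : Fin n ⊕ Fin n => 1) : (Fin n ⊕ Fin n) →₀ ℕ)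
      = 2 * n := by
  rw [degE_eq_sum]
  simp [Fintype.card_sum]
  ring

lemma degE_polarized {n : ℕ} {s : (Fin n ⊕ Fin n) →₀ ℕ}
    (hsq : ∀ v, s v ≤ 1) (hpol : ∀ i : Fin n, s (Sum.inl i) = 0 ∨ s (Sum.inr i) = 0) :
    degE s ≤ n := by
  rw [degE_eq_sum, Fintype.sum_sum_type, ← Finset.sum_add_distrib]
  calc (∑ i : Fin n, (s (Sum.inl i) + s (Sum.inr i))) ≤ ∑ _i : Fin n, 1 := by
        refine Finset.sum_le_sum fun i _ => ?_
        rcases hpol i with h | h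
        · have := hsq (Sum.inr i); omega
        · have := hsq (Sum.inl i); omega
  _ = n := by simp

/-- Indicator finsupp of a finset. -/
lemma finite_of_squarefree {n : ℕ} {G : Set ((Fin n ⊕ Fin n) →₀ ℕ)}
    (hsq : ∀ s ∈ G, ∀ v, s v ≤ 1) : G.Finite := by
  have hsub : G ⊆ (fun (t : Finset (Fin n ⊕ Fin n)) =>
      (∑ v ∈ t, Finsupp.single v 1 : (Fin n ⊕ Fin n) →₀ ℕ)) '' Set.univ := by
    intro s hs
    refine ⟨s.support, Set.mem_univ _, ?_⟩
    ext v
    rw [Finsupp.finset_sum_apply]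
    have h1 : ∀ v' ∈ s.support, (Finsupp.single v' 1 : (Fin n ⊕ Fin n) →₀ ℕ) v
        = if v' = v then 1 else 0 := fun v' _ => Finsupp.single_apply
    rw [Finset.sum_congr rfl h1, Finset.sum_ite_eq' s.support v (fun _ => 1)]
    by_cases hv : v ∈ s.support
    · rw [if_pos hv]
      have h2 := Finsupp.mem_support_iff.mp hv
      have h3 := hsq s hs v
      omega
    · rw [if_neg hv]
      exact (Finsupp.notMem_support_iff.mp hv).symm
  exact Set.Finite.subset (Set.Finite.image _ Set.finite_univ) hsub

end Glue

end Identities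

end TaylorAux

/-- a nonzero polarized neural ideal on `n` neurons has Castelnuovo–Mumford
regularity at most `2n - 1`. -/
theorem stmt9 (k : Type) [Field k] (n : ℕ) (hn : 0 < n)
    (I : Ideal (MvPolynomial (Fin n ⊕ Fin n) k))
    (hI : IsPolarizedNeural k n I) (hne : I ≠ ⊥) :
    reg k (Fin n ⊕ Fin n) I ≤ 2 * n - 1 := by
  obtain ⟨G, hmin, hprop⟩ := hI
  have hspanG := hmin.1
  have hsq : ∀ s ∈ G, ∀ v, s v ≤ 1 := fun s hs => (hprop s hs).1
  have hfin : G.Finite := TaylorAux.finite_of_squarefree hsq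
  have hGne : G.Nonempty := by
    by_contra hGe
    rw [Set.not_nonempty_iff_eq_empty] at hGe
    apply hne
    rw [hspanG, hGe]
    simp
  set r : ℕ := hfin.toFinset.card with hr
  set g : Fin r → ((Fin n ⊕ Fin n) →₀ ℕ) := fun a => (hfin.toFinset.equivFin.symm a : _) with hg
  have hgG : ∀ a, g a ∈ G := fun a => by
    have h1 := (hfin.toFinset.equivFin.symm a).2
    rwa [Set.Finite.mem_toFinset] at h1
  have hsurj : ∀ s ∈ G, ∃ a, g a = s := by
    intro s hs
    refine ⟨hfin.toFinset.equivFin ⟨s, ?_⟩, ?_⟩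
    · rwa [Set.Finite.mem_toFinset]
    · rw [hg]; simp
  have hdiv : ∀ x ∈ I, ∀ c ∈ x.support, ∃ a, g a ≤ c := by
    intro x hx c hc
    rw [hspanG] at hx
    obtain ⟨s, hsG, hsle⟩ := MvPolynomial.mem_ideal_span_monomial_image.mp hx c hc
    obtain ⟨a, rfl⟩ := hsurj s hsG
    exact ⟨a, hsle⟩
  have hgen : ∀ a, (monomial (g a) 1 : MvPolynomial (Fin n ⊕ Fin n) k) ∈ I := by
    intro a
    rw [hspanG]
    exact Ideal.subset_span ⟨g a, hgG a, rfl⟩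
  have hdeg : ∀ (i : ℕ) (w : Fin (i+1) → Fin r), TaylorAux.degT g w < 2*n + i := by
    intro i w
    match i with
    | 0 =>
      rw [TaylorAux.degT, TaylorAux.lcmT_fin1]
      have h1 := TaylorAux.degE_polarized (hsq _ (hgG (w 0))) ((hprop _ (hgG (w 0))).2)
      omega
    | (i+1) =>
      have h1 : TaylorAux.lcmT g w ≤ Finsupp.equivFunOnFinite.symm (fun _ => 1) :=
        TaylorAux.lcmT_le g w fun x => TaylorAux.squarefree_le_ones (hsq _ (hgG (w x)))
      have h2 := TaylorAux.degE_mono h1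
      rw [TaylorAux.degE_ones] at h2
      rw [TaylorAux.degT]
      omega
  rw [reg]
  refine csSup_le' ?_
  rintro x ⟨i, j, ⟨B, ⟨R⟩, hB⟩, rfl⟩
  by_contra hgt
  push_neg at hgt
  have hle : 2*n + i ≤ j := by omega
  exact TaylorAux.betti_vanish g R hdiv hgen (2*n) hdeg i j hle hB

end Neural
end

section
/- Let J ⊆ K be monomial ideals in k[x_1,...,x_{n-1},y_1,...,y_{n-1}] both generated in degree n−1 and both having linear quotients. Then the ideal I = x_n J + y_n K in k[x_1,...,x_n,y_1,...,y_n] has linear quotients. -/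
open MvPolynomial

namespace Neural

/-- The last index `n - 1` in `Fin n`. -/
def lastIdx (n : ℕ) (hn : 0 < n) : Fin n := ⟨n - 1, Nat.sub_lt hn Nat.one_pos⟩

variable {k : Type} [Field k] {σ : Type}

lemma degE_add (a b : σ →₀ ℕ) : degE (a + b) = degE a + degE b :=
  Finsupp.sum_add_index' (fun _ => rfl) (fun _ _ _ => rfl)

lemma degE_eq_zero {a : σ →₀ ℕ} (h : degE a = 0) : a = 0 := by
  ext v
  by_cases hv : v ∈ a.support
  · exact (Finset.sum_eq_zero_iff.mp h v hv)
  · simpa using Finsupp.notMem_support_iff.mp hv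

lemma eq_of_le_of_degE_eq {a b : σ →₀ ℕ} (h : a ≤ b) (hd : degE a = degE b) : a = b := by
  have h1 : b - a + a = b := tsub_add_cancel_of_le h
  have h2 : degE (b - a) = 0 := by
    have := degE_add (b - a) a
    rw [h1, ← hd] at this
    omega
  have := degE_eq_zero h2
  have hba : b ≤ a := tsub_eq_zero_iff_le.mp this
  exact le_antisymm h hba

lemma mem_span_monomials_iff {G : Set (σ →₀ ℕ)} {p : MvPolynomial σ k} :
    p ∈ Ideal.span ((fun s => (monomial s 1 : MvPolynomial σ k)) '' G) ↔
      ∀ m ∈ p.support, ∃ t ∈ G, t ≤ m := by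
  classical
  constructor
  · intro hp
    refine Submodule.span_induction ?_ ?_ ?_ ?_ hp
    · rintro _ ⟨t, ht, rfl⟩ m hm
      rw [support_monomial, if_neg one_ne_zero, Finset.mem_singleton] at hm
      exact ⟨t, ht, hm ▸ le_refl t⟩
    · intro m hm; simp at hm
    · intro a b _ _ ha hb m hm
      rcases Finset.mem_union.mp (MvPolynomial.support_add hm) with h | h
      · exact ha m h
      · exact hb m h
    · intro r a _ hia m hm
      have : m ∈ (r * a).support := by rwa [smul_eq_mul] at hm
      rcases Finset.mem_add.mp (MvPolynomial.support_mul r a this) with ⟨c, hc, d, hd, rfl⟩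
      obtain ⟨t, ht, htd⟩ := hia d hd
      exact ⟨t, ht, le_trans htd le_add_self⟩
  · intro h
    rw [p.as_sum]
    apply Ideal.sum_mem
    intro m hm
    obtain ⟨t, htG, htm⟩ := h m hm
    have heq : (monomial m (coeff m p) : MvPolynomial σ k)
        = monomial (m - t) (coeff m p) * monomial t 1 := by
      rw [monomial_mul, mul_one, tsub_add_cancel_of_le htm]
    rw [heq]
    exact Ideal.mul_mem_left _ _ (Ideal.subset_span ⟨t, htG, rfl⟩)

lemma monomial_mem_span_iff {G : Set (σ →₀ ℕ)} {s : σ →₀ ℕ} :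
    (monomial s 1 : MvPolynomial σ k) ∈
        Ideal.span ((fun t => (monomial t 1 : MvPolynomial σ k)) '' G) ↔
      ∃ t ∈ G, t ≤ s := by
  classical
  rw [mem_span_monomials_iff]
  constructor
  · intro h
    refine h s ?_
    rw [support_monomial, if_neg one_ne_zero]
    exact Finset.mem_singleton_self s
  · rintro ⟨t, ht, hts⟩ m hm
    rw [support_monomial, if_neg one_ne_zero, Finset.mem_singleton] at hm
    exact ⟨t, ht, hm ▸ hts⟩

lemma mingens_subset {I : Ideal (MvPolynomial σ k)} {G G' : Set (σ →₀ ℕ)}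
    (h : IsMingens k σ I G) (h' : IsMingens k σ I G') : G ⊆ G' := by
  intro s hs
  have h1 : (monomial s 1 : MvPolynomial σ k) ∈ I := by
    rw [h.1]; exact Ideal.subset_span ⟨s, hs, rfl⟩
  rw [h'.1] at h1
  obtain ⟨t, ht, hts⟩ := monomial_mem_span_iff.mp h1
  have h2 : (monomial t 1 : MvPolynomial σ k) ∈ I := by
    rw [h'.1]; exact Ideal.subset_span ⟨t, ht, rfl⟩
  rw [h.1] at h2
  obtain ⟨v, hv, hvt⟩ := monomial_mem_span_iff.mp h2
  have hvs : v = s := by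
    by_contra hne
    exact h.2 s hs (monomial_mem_span_iff.mpr ⟨v, ⟨hv, hne⟩, le_trans hvt hts⟩)
  have hts' : t = s := le_antisymm hts (hvs ▸ hvt)
  exact hts' ▸ ht

lemma mingens_unique {I : Ideal (MvPolynomial σ k)} {G G' : Set (σ →₀ ℕ)}
    (h : IsMingens k σ I G) (h' : IsMingens k σ I G') : G = G' :=
  le_antisymm (mingens_subset h h') (mingens_subset h' h)

lemma lcmE_apply (a b : σ →₀ ℕ) (v : σ) : lcmE a b v = max (a v) (b v) :=
  Finsupp.zipWith_apply

lemma le_lcmE_left (a b : σ →₀ ℕ) : a ≤ lcmE a b :=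
  Finsupp.le_def.mpr fun v => by rw [lcmE_apply]; exact le_max_left _ _

lemma le_lcmE_right (a b : σ →₀ ℕ) : b ≤ lcmE a b :=
  Finsupp.le_def.mpr fun v => by rw [lcmE_apply]; exact le_max_right _ _

lemma lcmE_le {a b c : σ →₀ ℕ} (ha : a ≤ c) (hb : b ≤ c) : lcmE a b ≤ c :=
  Finsupp.le_def.mpr fun v => by
    rw [lcmE_apply]
    exact max_le (Finsupp.le_def.mp ha v) (Finsupp.le_def.mp hb v)

lemma lcmE_self (a : σ →₀ ℕ) : lcmE a a = a := by
  ext v; rw [lcmE_apply, max_self]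

lemma colon_span_monomials (G : Set (σ →₀ ℕ)) (s : σ →₀ ℕ) :
    Submodule.colon (Ideal.span ((fun t => (monomial t 1 : MvPolynomial σ k)) '' G))
      (Ideal.span {(monomial s 1 : MvPolynomial σ k)}) =
    Ideal.span ((fun t => (monomial t 1 : MvPolynomial σ k)) ''
      ((fun t => lcmE t s - s) '' G)) := by
  ext p
  rw [Ideal.mem_colon_span_singleton, mem_span_monomials_iff, mem_span_monomials_iff]
  constructor
  · intro h m hm
    obtain ⟨t, htG, ht⟩ := h (m + s) (by
      rw [mem_support_iff, coeff_mul_monomial', if_pos le_add_self, add_tsub_cancel_right,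
        mul_one]
      exact mem_support_iff.mp hm)
    refine ⟨lcmE t s - s, ⟨t, htG, rfl⟩, ?_⟩
    exact tsub_le_iff_right.mpr (lcmE_le ht le_add_self)
  · intro h m hm
    rw [mem_support_iff, coeff_mul_monomial'] at hm
    split_ifs at hm with hs
    · rw [mul_one] at hm
      obtain ⟨_, ⟨t, htG, rfl⟩, hw⟩ := h (m - s) (mem_support_iff.mpr hm)
      refine ⟨t, htG, ?_⟩
      calc t ≤ lcmE t s := le_lcmE_left t s
        _ = lcmE t s - s + s := (tsub_add_cancel_of_le (le_lcmE_right t s)).symm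
        _ ≤ m - s + s := add_le_add_left hw s
        _ = m := tsub_add_cancel_of_le hs
    · exact absurd rfl hm

lemma lcmE_add_sub (c a b : σ →₀ ℕ) : lcmE (c + a) (c + b) - (c + b) = lcmE a b - b := by
  ext v
  simp only [Finsupp.tsub_apply, lcmE_apply, Finsupp.add_apply]
  omega

lemma lcmE_mixed {x y : σ} (hxy : x ≠ y) {a m : σ →₀ ℕ}
    (hax : a x = 0) (hay : a y = 0) (hmx : m x = 0) (hmy : m y = 0) :
    lcmE (Finsupp.single y 1 + a) (Finsupp.single x 1 + m) - (Finsupp.single x 1 + m)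
      = Finsupp.single y 1 + (lcmE a m - m) := by
  classical
  ext v
  simp only [Finsupp.tsub_apply, lcmE_apply, Finsupp.add_apply, Finsupp.single_apply]
  have hyx : y ≠ x := fun h => hxy h.symm
  by_cases hvx : x = v
  · subst hvx
    simp [hax, hmx, hyx]
  · by_cases hvy : y = v
    · subst hvy
      simp [hay, hmy, hvx]
    · simp [hvx, hvy]

lemma span_X_mul (v : σ) (G : Set (σ →₀ ℕ)) :
    Ideal.span {(X v : MvPolynomial σ k)} *
        Ideal.span ((fun s => (monomial s 1 : MvPolynomial σ k)) '' G) =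
      Ideal.span ((fun s => (monomial s 1 : MvPolynomial σ k)) ''
        ((fun s => Finsupp.single v 1 + s) '' G)) := by
  rw [Ideal.span_mul_span']
  congr 1
  ext p
  constructor
  · rintro ⟨x, hx, q, ⟨t, ht, rfl⟩, rfl⟩
    rw [Set.mem_singleton_iff] at hx
    subst hx
    exact ⟨Finsupp.single v 1 + t, ⟨t, ht, rfl⟩, by
      simp [X, monomial_mul]⟩
  · rintro ⟨_, ⟨t, ht, rfl⟩, rfl⟩
    exact ⟨X v, rfl, monomial t 1, ⟨t, ht, rfl⟩, by simp [X, monomial_mul]⟩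

/-- if `J ⊆ K` are monomial ideals generated in degree `n - 1` by monomials
not involving `x_n, y_n`, and both have linear quotients, then `I = x_n J + y_n K` has
linear quotients. -/
theorem stmt14 (k : Type) [Field k] (n : ℕ) (hn : 0 < n)
    (J K : Ideal (MvPolynomial (Fin n ⊕ Fin n) k))
    (GJ GK : Set ((Fin n ⊕ Fin n) →₀ ℕ))
    (hGJ : IsMingens k (Fin n ⊕ Fin n) J GJ)
    (hGK : IsMingens k (Fin n ⊕ Fin n) K GK)
    (hdJ : ∀ s ∈ GJ, degE s = n - 1 ∧
      s (Sum.inl (lastIdx n hn)) = 0 ∧ s (Sum.inr (lastIdx n hn)) = 0)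
    (hdK : ∀ s ∈ GK, degE s = n - 1 ∧
      s (Sum.inl (lastIdx n hn)) = 0 ∧ s (Sum.inr (lastIdx n hn)) = 0)
    (hLQJ : HasLinearQuotients k (Fin n ⊕ Fin n) J)
    (hLQK : HasLinearQuotients k (Fin n ⊕ Fin n) K)
    (hJK : J ≤ K) :
    HasLinearQuotients k (Fin n ⊕ Fin n)
      (Ideal.span {(X (Sum.inl (lastIdx n hn)) : MvPolynomial (Fin n ⊕ Fin n) k)} * J
        + Ideal.span {(X (Sum.inr (lastIdx n hn)) : MvPolynomial (Fin n ⊕ Fin n) k)} * K) := by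
  classical
  obtain ⟨LJ, hNJ, hMJ, hCJ⟩ := hLQJ
  obtain ⟨LK, hNK, hMK, hCK⟩ := hLQK
  set x : Fin n ⊕ Fin n := Sum.inl (lastIdx n hn) with hxdef
  set y : Fin n ⊕ Fin n := Sum.inr (lastIdx n hn) with hydef
  have hxy : x ≠ y := by simp [hxdef, hydef]
  have hsxx : (Finsupp.single x 1 : (Fin n ⊕ Fin n) →₀ ℕ) x = 1 := Finsupp.single_eq_same
  have hsxy : (Finsupp.single x 1 : (Fin n ⊕ Fin n) →₀ ℕ) y = 0 :=
    Finsupp.single_eq_of_ne' hxy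
  have hsyx : (Finsupp.single y 1 : (Fin n ⊕ Fin n) →₀ ℕ) x = 0 :=
    Finsupp.single_eq_of_ne' (Ne.symm hxy)
  have hsyy : (Finsupp.single y 1 : (Fin n ⊕ Fin n) →₀ ℕ) y = 1 := Finsupp.single_eq_same
  have hGJ' : GJ = {s | s ∈ LJ} := mingens_unique hGJ hMJ
  have hGK' : GK = {s | s ∈ LK} := mingens_unique hGK hMK
  have hdJ' : ∀ s ∈ LJ, degE s = n - 1 ∧ s x = 0 ∧ s y = 0 := by
    intro s hs; exact hdJ s (by rw [hGJ']; exact hs)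
  have hdK' : ∀ s ∈ LK, degE s = n - 1 ∧ s x = 0 ∧ s y = 0 := by
    intro s hs; exact hdK s (by rw [hGK']; exact hs)
  have hsub : ∀ s ∈ LJ, s ∈ LK := by
    intro s hs
    have h1 : (monomial s 1 : MvPolynomial (Fin n ⊕ Fin n) k) ∈ K := by
      apply hJK
      rw [hMJ.1]
      exact Ideal.subset_span ⟨s, hs, rfl⟩
    rw [hMK.1] at h1
    obtain ⟨t, ht, hts⟩ := monomial_mem_span_iff.mp h1
    have heq : t = s := eq_of_le_of_degE_eq hts (by rw [(hdK' t ht).1, (hdJ' s hs).1])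
    exact heq ▸ ht
  refine ⟨LK.map (fun s => Finsupp.single y 1 + s) ++ LJ.map (fun s => Finsupp.single x 1 + s),
    ?_, ⟨?_, ?_⟩, ?_⟩
  · -- Nodup
    apply List.Nodup.append
    · exact hNK.map (add_right_injective _)
    · exact hNJ.map (add_right_injective _)
    · intro t htK htJ
      obtain ⟨a, haK, rfl⟩ := List.mem_map.mp htK
      obtain ⟨b, hbJ, hba⟩ := List.mem_map.mp htJ
      have hc := congrArg (fun f => f x) hba
      simp only [Finsupp.add_apply] at hc
      rw [hsxx, hsyx, (hdK' a haK).2.1, (hdJ' b hbJ).2.1] at hc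
      omega
  · -- ideal equality
    have hsets : ((fun s => Finsupp.single x 1 + s) '' {s | s ∈ LJ})
        ∪ ((fun s => Finsupp.single y 1 + s) '' {s | s ∈ LK})
        = {s | s ∈ LK.map (fun s => Finsupp.single y 1 + s)
            ++ LJ.map (fun s => Finsupp.single x 1 + s)} := by
      ext t
      simp only [Set.mem_union, Set.mem_image, Set.mem_setOf_eq, List.mem_append,
        List.mem_map]
      exact or_comm
    rw [hMJ.1, hMK.1, span_X_mul, span_X_mul, Submodule.add_eq_sup, ← Ideal.span_union,
      ← Set.image_union, hsets]
  · -- minimality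
    intro s hs hmem
    obtain ⟨t, htmem, hts⟩ := monomial_mem_span_iff.mp hmem
    obtain ⟨htL, htne⟩ := htmem
    have htne' : t ≠ s := htne
    have hforms : ∀ z, z ∈ LK.map (fun s => Finsupp.single y 1 + s)
        ++ LJ.map (fun s => Finsupp.single x 1 + s) →
        (∃ a ∈ LK, z = Finsupp.single y 1 + a) ∨ (∃ b ∈ LJ, z = Finsupp.single x 1 + b) := by
      intro z hz
      rcases List.mem_append.mp hz with hz | hz
      · obtain ⟨a, ha, rfl⟩ := List.mem_map.mp hz
        exact Or.inl ⟨a, ha, rfl⟩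
      · obtain ⟨b, hb, rfl⟩ := List.mem_map.mp hz
        exact Or.inr ⟨b, hb, rfl⟩
    rcases hforms s hs with ⟨a, haK, rfl⟩ | ⟨b, hbJ, rfl⟩ <;>
      rcases hforms t htL with ⟨a', ha'K, rfl⟩ | ⟨b', hb'J, rfl⟩
    · have hle : a' ≤ a := by
        have := hts
        rwa [add_le_add_iff_left] at this
      have : a' = a := eq_of_le_of_degE_eq hle (by rw [(hdK' _ ha'K).1, (hdK' _ haK).1])
      exact htne' (by rw [this])
    · have h1 := Finsupp.le_def.mp hts x
      simp only [Finsupp.add_apply] at h1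
      rw [hsxx, hsyx, (hdK' a haK).2.1, (hdJ' b' hb'J).2.1] at h1
      omega
    · have h1 := Finsupp.le_def.mp hts y
      simp only [Finsupp.add_apply] at h1
      rw [hsxy, hsyy, (hdK' a' ha'K).2.2, (hdJ' b hbJ).2.2] at h1
      omega
    · have hle : b' ≤ b := by
        have := hts
        rwa [add_le_add_iff_left] at this
      have : b' = b := eq_of_le_of_degE_eq hle (by rw [(hdJ' _ hb'J).1, (hdJ' _ hbJ).1])
      exact htne' (by rw [this])
  · -- colon conditions
    intro i h
    by_cases hcase : i + 1 < LK.length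
    · obtain ⟨V, hV⟩ := hCK i hcase
      refine ⟨V, ?_⟩
      have htake : (LK.map (fun s => Finsupp.single y 1 + s)
            ++ LJ.map (fun s => Finsupp.single x 1 + s)).take (i+1)
          = (LK.take (i+1)).map (fun s => Finsupp.single y 1 + s) := by
        rw [List.take_append]
        rw [List.length_map, Nat.sub_eq_zero_of_le (Nat.le_of_lt hcase)]
        rw [List.take_zero, List.append_nil, List.map_take]
      have h1 : i + 1 < (LK.map (fun s => Finsupp.single y 1 + s)).length := by
        simpa using hcase
      have hget : (LK.map (fun s => Finsupp.single y 1 + s)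
            ++ LJ.map (fun s => Finsupp.single x 1 + s)).get ⟨i+1, h⟩
          = Finsupp.single y 1 + LK.get ⟨i+1, hcase⟩ := by
        rw [List.get_eq_getElem, List.get_eq_getElem]
        rw [List.getElem_append_left h1, List.getElem_map]
      rw [htake, hget]
      have hset : {s | s ∈ (LK.take (i+1)).map (fun s => Finsupp.single y 1 + s)}
          = (fun s => Finsupp.single y 1 + s) '' {s | s ∈ LK.take (i+1)} := by
        ext t
        simp only [Set.mem_setOf_eq, List.mem_map, Set.mem_image]
      rw [hset, colon_span_monomials]
      simp only [Set.image_image]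
      rw [colon_span_monomials] at hV
      have himg : (fun a => (monomial (lcmE (Finsupp.single y 1 + a)
              (Finsupp.single y 1 + LK.get ⟨i+1, hcase⟩)
              - (Finsupp.single y 1 + LK.get ⟨i+1, hcase⟩)) 1
              : MvPolynomial (Fin n ⊕ Fin n) k)) '' {s | s ∈ LK.take (i+1)}
          = (fun t => (monomial t 1 : MvPolynomial (Fin n ⊕ Fin n) k)) ''
            ((fun t => lcmE t (LK.get ⟨i+1, hcase⟩) - LK.get ⟨i+1, hcase⟩) ''
              {s | s ∈ LK.take (i+1)}) := by
        rw [Set.image_image]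
        exact Set.image_congr fun a _ => by rw [lcmE_add_sub]
      rw [himg]
      exact hV
    · push_neg at hcase
      have hlen : (LK.map (fun s => Finsupp.single y 1 + s)
          ++ LJ.map (fun s => Finsupp.single x 1 + s)).length = LK.length + LJ.length := by
        simp
      have hj : i + 1 - LK.length < LJ.length := by omega
      set j := i + 1 - LK.length with hjdef
      set m := LJ.get ⟨j, hj⟩ with hmdef
      have hmJ : m ∈ LJ := List.get_mem LJ ⟨j, hj⟩
      have hmx : m x = 0 := (hdJ' m hmJ).2.1
      have hmy : m y = 0 := (hdJ' m hmJ).2.2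
      have htake : (LK.map (fun s => Finsupp.single y 1 + s)
            ++ LJ.map (fun s => Finsupp.single x 1 + s)).take (i+1)
          = LK.map (fun s => Finsupp.single y 1 + s)
            ++ (LJ.take j).map (fun s => Finsupp.single x 1 + s) := by
        rw [List.take_append]
        congr 1
        · rw [List.take_of_length_le (by simpa using hcase)]
        · rw [List.map_take]
          congr 2
          simp [hjdef]
      have hget : (LK.map (fun s => Finsupp.single y 1 + s)
            ++ LJ.map (fun s => Finsupp.single x 1 + s)).get ⟨i+1, h⟩
          = Finsupp.single x 1 + m := by
        rw [List.get_eq_getElem,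
          List.getElem_append_right (by simpa using hcase)]
        rw [List.getElem_map]
        simp only [List.length_map]
        rfl
      obtain ⟨V, hVspan⟩ : ∃ V : Set (Fin n ⊕ Fin n),
          Ideal.span ((fun s => (monomial s 1 : MvPolynomial (Fin n ⊕ Fin n) k)) ''
              ((fun b => lcmE b m - m) '' {s | s ∈ LJ.take j}))
            = Ideal.span ((fun v => (X v : MvPolynomial (Fin n ⊕ Fin n) k)) '' V) := by
        rcases Nat.eq_zero_or_pos j with hj0 | hjpos
        · refine ⟨∅, ?_⟩
          rw [hj0]
          simp
        · obtain ⟨j', hj'⟩ : ∃ j', j = j' + 1 := ⟨j - 1, by omega⟩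
          obtain ⟨V, hV⟩ := hCJ j' (by omega)
          rw [colon_span_monomials] at hV
          refine ⟨V, ?_⟩
          have hfin : (⟨j, hj⟩ : Fin LJ.length) = ⟨j' + 1, hj' ▸ hj⟩ := by
            simp only [Fin.mk.injEq]; exact hj'
          have hm2 : m = LJ.get ⟨j' + 1, hj' ▸ hj⟩ := by rw [hmdef, hfin]
          rw [hj', hm2]
          exact hV
      refine ⟨insert y V, ?_⟩
      rw [hget]
      have hset : {s | s ∈ (LK.map (fun s => Finsupp.single y 1 + s)
            ++ LJ.map (fun s => Finsupp.single x 1 + s)).take (i+1)}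
          = (fun s => Finsupp.single y 1 + s) '' {s | s ∈ LK}
            ∪ (fun s => Finsupp.single x 1 + s) '' {s | s ∈ LJ.take j} := by
        rw [htake]; ext t
        simp only [Set.mem_setOf_eq, List.mem_append, List.mem_map, Set.mem_union,
          Set.mem_image]
      rw [hset, colon_span_monomials]
      simp only [Set.image_union, Set.image_image]
      have himg1 : (fun a => (monomial (lcmE (Finsupp.single y 1 + a) (Finsupp.single x 1 + m)
              - (Finsupp.single x 1 + m)) 1 : MvPolynomial (Fin n ⊕ Fin n) k)) '' {s | s ∈ LK}
          = (fun s => (monomial s 1 : MvPolynomial (Fin n ⊕ Fin n) k)) ''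
            ((fun a => Finsupp.single y 1 + (lcmE a m - m)) '' {s | s ∈ LK}) := by
        rw [Set.image_image]
        exact Set.image_congr fun a ha => by
          rw [lcmE_mixed hxy (hdK' a ha).2.1 (hdK' a ha).2.2 hmx hmy]
      have himg2 : (fun b => (monomial (lcmE (Finsupp.single x 1 + b) (Finsupp.single x 1 + m)
              - (Finsupp.single x 1 + m)) 1 : MvPolynomial (Fin n ⊕ Fin n) k)) ''
              {s | s ∈ LJ.take j}
          = (fun s => (monomial s 1 : MvPolynomial (Fin n ⊕ Fin n) k)) ''
            ((fun b => lcmE b m - m) '' {s | s ∈ LJ.take j}) := by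
        rw [Set.image_image]
        exact Set.image_congr fun b _ => by rw [lcmE_add_sub]
      rw [himg1, himg2, Ideal.span_union, hVspan]
      have hspan1 : Ideal.span ((fun s => (monomial s 1 : MvPolynomial (Fin n ⊕ Fin n) k)) ''
            ((fun a => Finsupp.single y 1 + (lcmE a m - m)) '' {s | s ∈ LK}))
          = Ideal.span {(X y : MvPolynomial (Fin n ⊕ Fin n) k)} := by
        apply le_antisymm
        · rw [Ideal.span_le]
          rintro _ ⟨_, ⟨a, _, rfl⟩, rfl⟩
          rw [SetLike.mem_coe, Ideal.mem_span_singleton']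
          refine ⟨monomial (lcmE a m - m) 1, ?_⟩
          rw [show (X y : MvPolynomial (Fin n ⊕ Fin n) k) = monomial (Finsupp.single y 1) 1
            from rfl, monomial_mul, one_mul, add_comm]
        · rw [Ideal.span_singleton_le_iff_mem]
          apply Ideal.subset_span
          refine ⟨Finsupp.single y 1 + (lcmE m m - m), ⟨m, hsub m hmJ, rfl⟩, ?_⟩
          rw [lcmE_self, tsub_self, add_zero]
          rfl
      rw [hspan1, Set.image_insert_eq, Ideal.span_insert]

end Neural
end
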